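/- For every F̂-invariant Borel probability measure ν̂ on Σ×X one has ∫_{Σ×X} φ̂ dν̂ ≤ ∫_Σ φ̃ d(ν̂∘π^{-1}), where π : Σ×X → Σ is the projection π(ω,t) := ω. -/

import Mathlib

open MeasureTheory Filter Topology Real

set_option linter.unusedSectionVars false

attribute [local instance] Classical.propDecidable

namespace POE

variable {A : Type} [Fintype A] [DecidableEq A] [TopologicalSpace A] [DiscreteTopology A]

/-- The one-sided compact topological Markov shift associated to the transition
matrix `Mtx`: the space of sequences `ω : ℕ → A` all of whose transitions are allowed. -/
abbrev SubShift (Mtx : A → A → Bool) : Type :=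
  {ω : ℕ → A // ∀ i, Mtx (ω i) (ω (i + 1)) = true}

variable (Mtx : A → A → Bool)

/-- The left shift `T` on the Markov shift. -/
def shiftT (ω : SubShift Mtx) : SubShift Mtx :=
  ⟨fun i => ω.1 (i + 1), fun i => ω.2 (i + 1)⟩

/-- The metric `d(ω,ω') = 2^{-min{i : ω_i ≠ ω'_i}}` on the Markov shift. -/
noncomputable def dShift (ω ω' : SubShift Mtx) : ℝ :=
  if h : ω = ω' then 0
  else (2 : ℝ) ^ (-(Nat.find (p := fun i => ¬ (ω.1 i = ω'.1 i))
      (by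
        by_contra hc
        push_neg at hc
        exact h (Subtype.ext (funext fun i => hc i))) : ℤ))

/-- The cylinder set `[w]` of a word `w` of length `n`. -/
def cylinder (n : ℕ) (w : Fin n → A) : Set (SubShift Mtx) :=
  {ω | ∀ i : Fin n, ω.1 i.1 = w i}

/-- Topological transitivity of the shift. -/
def TopologicallyTransitive : Prop :=
  ∀ U V : Set (SubShift Mtx), IsOpen U → IsOpen V → U.Nonempty → V.Nonempty →
    ∃ n : ℕ, (U ∩ (shiftT Mtx)^[n] ⁻¹' V).Nonempty

/-- Borel σ-algebra on the shift space. -/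
instance : MeasurableSpace (SubShift Mtx) := borel _

instance : BorelSpace (SubShift Mtx) := ⟨rfl⟩

variable {X : Type} [MetricSpace X]

/-- The random compositions `F_ω^k := F_{T^{k-1}ω} ∘ ⋯ ∘ F_ω`, with `F_ω^0 = id`. -/
def iterF (F : SubShift Mtx → X → X) (ω : SubShift Mtx) : ℕ → X → X
  | 0 => id
  | k + 1 => F ((shiftT Mtx)^[k] ω) ∘ iterF F ω k

/-- The concatenated sequence `w ω_a` of a word `w` of length `n` (ending with the symbol
starting `θ`) and a sequence `θ`. -/
def concatSeq (n : ℕ) (w : Fin n → A) (θ : ℕ → A) : ℕ → A :=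
  fun i => if h : i < n then w ⟨i, h⟩ else θ (i - n + 1)

theorem concat_mem (n : ℕ) (hn : 0 < n) (w : Fin n → A)
    (hadm : (cylinder Mtx n w).Nonempty) (θ : SubShift Mtx)
    (hθ : θ.1 0 = w ⟨n - 1, Nat.sub_lt hn one_pos⟩) :
    ∀ i, Mtx (concatSeq n w θ.1 i) (concatSeq n w θ.1 (i + 1)) = true := by
  obtain ⟨η, hη⟩ := hadm
  intro i
  unfold concatSeq
  by_cases h1 : i + 1 < n
  · have h0 : i < n := Nat.lt_of_succ_lt h1
    rw [dif_pos h0, dif_pos h1]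
    have e0 : η.1 i = w ⟨i, h0⟩ := hη ⟨i, h0⟩
    have e1 : η.1 (i + 1) = w ⟨i + 1, h1⟩ := hη ⟨i + 1, h1⟩
    rw [← e0, ← e1]
    exact η.2 i
  · by_cases h0 : i < n
    · have hi : i = n - 1 := by omega
      rw [dif_pos h0, dif_neg h1]
      have e2 : i + 1 - n + 1 = 1 := by omega
      rw [e2]
      subst hi
      rw [← hθ]
      exact θ.2 0
    · rw [dif_neg h0, dif_neg h1]
      have e4 : i + 1 - n + 1 = (i - n + 1) + 1 := by omega
      rw [e4]
      exact θ.2 (i - n + 1)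

/-- The point `w ω_a ∈ Σ` obtained by concatenating an admissible word `w` of
positive length ending with the symbol `a` and a point `ω_a ∈ [a]`. -/
noncomputable def wordPoint (n : ℕ) (w : Fin n → A) (a : A) (ωa : SubShift Mtx)
    (hωa : ωa.1 0 = a)
    (h : (cylinder Mtx n w).Nonempty ∧ ∃ hn : 0 < n, w ⟨n - 1, Nat.sub_lt hn one_pos⟩ = a) :
    SubShift Mtx :=
  ⟨concatSeq n w ωa.1,
    concat_mem Mtx n h.2.choose w h.1 ωa (hωa.trans h.2.choose_spec.symm)⟩

/-- The pinned partition function `Ž_n(φ_t, a)` of the family `{φ_t}_{t ∈ X}`: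
the sum over admissible words `w` of length `n` with `w_{n-1} = a` of
`exp (Σ_{k<n} φ_{F^k_{wω_a}(t)} (T^k (w ω_a)))`. -/
noncomputable def Zcheck (F : SubShift Mtx → X → X) (φ : X → SubShift Mtx → ℝ)
    (a : A) (ωa : SubShift Mtx) (hωa : ωa.1 0 = a) (n : ℕ) (t : X) : ℝ :=
  ∑ w : Fin n → A,
    if h : (cylinder Mtx n w).Nonempty ∧
        ∃ hn : 0 < n, w ⟨n - 1, Nat.sub_lt hn one_pos⟩ = a then
      Real.exp (∑ k ∈ Finset.range n,
        φ (iterF Mtx F (wordPoint Mtx n w a ωa hωa h) k t)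
          ((shiftT Mtx)^[k] (wordPoint Mtx n w a ωa hωa h)))
    else 0

/-- The pressure out of equilibrium
`P̌({φ_t}) = limsup_n (1/n) log sup_{t∈X} Ž_n(φ_t,a)`. -/
noncomputable def POEPressure (F : SubShift Mtx → X → X) (φ : X → SubShift Mtx → ℝ)
    (a : A) (ωa : SubShift Mtx) (hωa : ωa.1 0 = a) : ℝ :=
  Filter.limsup
    (fun n : ℕ => (n : ℝ)⁻¹ * Real.log (⨆ t : X, Zcheck Mtx F φ a ωa hωa n t))
    Filter.atTop

/-- The unpinned partition function
`Z_n = sup_t Σ_{w admissible, |w|=n} max_{θ ∈ [w]} exp (Σ_{k<n} φ_{F^k_θ(t)}(T^k θ))`,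
the maximum over the compact cylinder being realized as the `sSup` over `[w]`. -/
noncomputable def Zfull (F : SubShift Mtx → X → X) (φ : X → SubShift Mtx → ℝ) (n : ℕ) : ℝ :=
  ⨆ t : X, ∑ w : Fin n → A,
    if (cylinder Mtx n w).Nonempty then
      sSup ((fun θ : SubShift Mtx =>
        Real.exp (∑ k ∈ Finset.range n,
          φ (iterF Mtx F θ k t) ((shiftT Mtx)^[k] θ))) '' cylinder Mtx n w)
    else 0

/-- The maximal asymptotic instability potential
`φ̃(ω) = limsup_n sup_{t∈X} (1/n) Σ_{k<n} φ̂(F̂^k(ω,t))`. -/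
noncomputable def phiTilde (F : SubShift Mtx → X → X) (φ : X → SubShift Mtx → ℝ)
    (ω : SubShift Mtx) : ℝ :=
  Filter.limsup
    (fun n : ℕ => ⨆ t : X, (n : ℝ)⁻¹ *
      ∑ k ∈ Finset.range n, φ (iterF Mtx F ω k t) ((shiftT Mtx)^[k] ω))
    Filter.atTop

/-- The Kolmogorov–Sinai entropy `h_ν(T)` of a shift-invariant measure, computed through
cylinders: `h_ν(T) = lim_n (1/n) Σ_{|w|=n} (-ν[w] log ν[w])` (the limit exists by
subadditivity, so it coincides with this `limsup`). -/
noncomputable def entropyKS (ν : Measure (SubShift Mtx)) : ℝ :=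
  Filter.limsup
    (fun n : ℕ => (n : ℝ)⁻¹ *
      ∑ w : Fin n → A, Real.negMulLog ((ν (cylinder Mtx n w)).toReal))
    Filter.atTop

/-- The skew product `F̂(ω,t) = (Tω, F_ω(t))` on `Σ × X`. -/
def skewF (F : SubShift Mtx → X → X) (p : SubShift Mtx × X) : SubShift Mtx × X :=
  (shiftT Mtx p.1, F p.1 p.2)

/-- The pinned partition function of a single potential `φ : Σ → ℝ`. -/
noncomputable def Zpin (φ : SubShift Mtx → ℝ) (a : A) (ωa : SubShift Mtx)
    (hωa : ωa.1 0 = a) (n : ℕ) : ℝ :=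
  ∑ w : Fin n → A,
    if h : (cylinder Mtx n w).Nonempty ∧
        ∃ hn : 0 < n, w ⟨n - 1, Nat.sub_lt hn one_pos⟩ = a then
      Real.exp (∑ k ∈ Finset.range n, φ ((shiftT Mtx)^[k] (wordPoint Mtx n w a ωa hωa h)))
    else 0

/-- The topological pressure `P(φ) = limsup_n (1/n) log Σ_{|w|=n, w_{n-1}=a} exp (φ^{(n)}(wω_a))`
of a potential `φ : Σ → ℝ`. -/
noncomputable def topPressure (φ : SubShift Mtx → ℝ) (a : A) (ωa : SubShift Mtx)
    (hωa : ωa.1 0 = a) : ℝ :=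
  Filter.limsup (fun n : ℕ => (n : ℝ)⁻¹ * Real.log (Zpin Mtx φ a ωa hωa n)) Filter.atTop

end POE

/-!
By `F̂`-invariance, `∫ φ̂ dν̂` equals the integral of the `n`-th Birkhoff average of `φ̂`, which is
dominated by its supremum over the fibre `{ω} × X`. These suprema are lower semicontinuous in `ω`
and uniformly bounded, so the reverse Fatou lemma carries the inequality to their `limsup`, which
is `φ̃`. Joint continuity of `F̂`, needed for the semicontinuity, comes from the Hölder bound on
`ω ↦ F_ω`, which makes `F_ω → F_{ω₀}` uniform.
-/

section BirkhoffAverage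

variable {α E : Type*} [NormedAddCommGroup E] [NormedSpace ℝ E]

theorem norm_birkhoffAverage_le {f : α → α} {g : α → E} {C : ℝ} (hg : ∀ x, ‖g x‖ ≤ C)
    (n : ℕ) (x : α) : ‖birkhoffAverage ℝ f g n x‖ ≤ C := by
  have hsum : ‖birkhoffSum f g n x‖ ≤ n * C := by
    simpa [birkhoffSum] using norm_sum_le_of_le (Finset.range n) fun k _ => hg (f^[k] x)
  rw [birkhoffAverage, norm_smul, norm_inv, RCLike.norm_natCast]
  exact inv_mul_le_of_le_mul₀ n.cast_nonneg ((norm_nonneg _).trans (hg x)) hsum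

theorem Continuous.birkhoffAverage [TopologicalSpace α] {f : α → α} {g : α → E}
    (hf : Continuous f) (hg : Continuous g) (n : ℕ) :
    Continuous (birkhoffAverage ℝ f g n) :=
  continuous_const.smul <| continuous_finsetSum _ fun k _ => hg.comp (hf.iterate k)

theorem MeasureTheory.MeasurePreserving.integral_birkhoffAverage [MeasurableSpace α]
    {μ : Measure α} {f : α → α} (hf : MeasurePreserving f μ μ) {g : α → E}
    (hg : Integrable g μ) {n : ℕ} (hn : n ≠ 0) :
    ∫ x, birkhoffAverage ℝ f g n x ∂μ = ∫ x, g x ∂μ := by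
  have hcomp (k : ℕ) : ∫ x, g (f^[k] x) ∂μ = ∫ x, g x ∂μ := by
    conv_rhs => rw [← (hf.iterate k).map_eq]
    exact (integral_map (hf.iterate k).aemeasurable
      (((hf.iterate k).map_eq).symm ▸ hg.aestronglyMeasurable)).symm
  have hint (k : ℕ) : Integrable (fun x => g (f^[k] x)) μ :=
    (hf.iterate k).integrable_comp_of_integrable hg
  simp only [birkhoffAverage, birkhoffSum, integral_smul]
  rw [integral_finsetSum _ fun k _ => hint k, Finset.sum_congr rfl fun k _ => hcomp k,
    Finset.sum_const, Finset.card_range, ← Nat.cast_smul_eq_nsmul ℝ,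
    inv_smul_smul₀ (Nat.cast_ne_zero.mpr hn)]

end BirkhoffAverage

theorem MeasureTheory.lintegral_ofReal_add_const {α : Type*} [MeasurableSpace α]
    {μ : Measure α} [IsFiniteMeasure μ] {u : α → ℝ} {C : ℝ} (hu : Integrable u μ)
    (huC : ∀ x, -C ≤ u x) :
    ∫⁻ x, ENNReal.ofReal (u x + C) ∂μ = ENNReal.ofReal (∫ x, u x ∂μ + ∫ _, C ∂μ) := by
  have huC' : Integrable (fun x => u x + C) μ := hu.add (integrable_const C)
  rw [← integral_add hu (integrable_const C), ofReal_integral_eq_lintegral_ofReal huC'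
    (.of_forall fun x => neg_le_iff_add_nonneg.mp (huC x))]

theorem MeasureTheory.le_integral_limsup_of_eventually_le_integral {α : Type*} [MeasurableSpace α]
    {μ : Measure α} [IsFiniteMeasure μ] {g : ℕ → α → ℝ} {C c : ℝ}
    (hg : ∀ n, Measurable (g n)) (hC : ∀ n x, |g n x| ≤ C)
    (hc : ∀ᶠ n in atTop, c ≤ ∫ x, g n x ∂μ) :
    c ≤ ∫ x, limsup (g · x) atTop ∂μ := by
  have hbdd (x : α) (a : ℝ) : IsBoundedUnder (· ≤ ·) atTop (g · x + a) :=
    isBoundedUnder_of ⟨C + a, fun n => by linarith [(abs_le.mp (hC n x)).2]⟩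
  have hcobdd (x : α) (a : ℝ) : IsCoboundedUnder (· ≤ ·) atTop (g · x + a) :=
    isCoboundedUnder_le_of_le atTop (x := -C + a) fun n => by linarith [(abs_le.mp (hC n x)).1]
  have hbdd₀ (x : α) : IsBoundedUnder (· ≤ ·) atTop (g · x) := by simpa using hbdd x 0
  have hcobdd₀ (x : α) : IsCoboundedUnder (· ≤ ·) atTop (g · x) := by simpa using hcobdd x 0
  set G : α → ℝ := fun x => limsup (g · x) atTop
  have hG_meas : Measurable G := .limsup hg
  have hG_abs (x : α) : |G x| ≤ C := abs_le.mpr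
    ⟨le_limsup_of_frequently_le (.of_forall fun n => (abs_le.mp (hC n x)).1) (hbdd₀ x),
      limsup_le_of_le (hcobdd₀ x) (.of_forall fun n => (abs_le.mp (hC n x)).2)⟩
  have hint {u : α → ℝ} (hu : Measurable u) (huC : ∀ x, |u x| ≤ C) : Integrable u μ :=
    .of_bound hu.aestronglyMeasurable C (.of_forall huC)
  -- After the shift by `C` all functions are nonnegative, so Fatou's lemma applies in `ℝ≥0∞`.
  have hlim (x : α) : limsup (fun n => ENNReal.ofReal (g n x + C)) atTop =
      ENNReal.ofReal (G x + C) := by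
    rw [← limsup_add_const _ _ _ (hbdd₀ x) (hcobdd₀ x)]
    exact (ENNReal.ofReal_mono.map_limsup_of_continuousAt _
      ENNReal.continuous_ofReal.continuousAt (hbdd x C) (hcobdd x C)).symm
  have hfatou : limsup (fun n => ∫⁻ x, ENNReal.ofReal (g n x + C) ∂μ) atTop ≤
      ∫⁻ x, limsup (fun n => ENNReal.ofReal (g n x + C)) atTop ∂μ :=
    limsup_lintegral_le (fun _ => ENNReal.ofReal (C + C))
      (fun n => ENNReal.measurable_ofReal.comp ((hg n).add_const C))
      (fun n => .of_forall fun x => ENNReal.ofReal_le_ofReal (by linarith [abs_le.mp (hC n x)]))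
      (by simp [lintegral_const, ENNReal.mul_eq_top])
  rw [lintegral_congr hlim, lintegral_ofReal_add_const (hint hG_meas hG_abs)
    fun x => (abs_le.mp (hG_abs x)).1] at hfatou
  have hc' : ENNReal.ofReal (c + ∫ _, C ∂μ) ≤
      limsup (fun n => ∫⁻ x, ENNReal.ofReal (g n x + C) ∂μ) atTop := by
    refine le_limsup_of_frequently_le (hc.mono fun n hn => ?_).frequently
    rw [lintegral_ofReal_add_const (hint (hg n) (hC n)) fun x => (abs_le.mp (hC n x)).1]
    exact ENNReal.ofReal_le_ofReal (by linarith)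
  have hG_low : ∫ _, -C ∂μ ≤ ∫ x, G x ∂μ :=
    integral_mono (integrable_const _) (hint hG_meas hG_abs) fun x => (abs_le.mp (hG_abs x)).1
  rw [integral_neg] at hG_low
  have := (ENNReal.ofReal_le_ofReal_iff (by linarith)).mp (hc'.trans hfatou)
  linarith

theorem continuous_uncurry_of_tendstoUniformly {α β γ : Type*} [TopologicalSpace α]
    [TopologicalSpace β] [UniformSpace γ] {F : α → β → γ} (hF : ∀ a, Continuous (F a))
    (hU : ∀ a, TendstoUniformly F (F a) (𝓝 a)) : Continuous (Function.uncurry F) :=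
  continuous_iff_continuousAt.2 fun p =>
    TendstoUniformly.tendsto_comp (F := fun q : α × β => F q.1)
      (fun u hu => continuousAt_fst.eventually (hU p.1 u hu)) (hF p.1).continuousAt continuousAt_snd

theorem integral_le_integral_limsup_iSup_birkhoffAverage {Y X : Type*}
    [TopologicalSpace Y] [MeasurableSpace Y] [BorelSpace Y] [SecondCountableTopology Y]
    [TopologicalSpace X] [MeasurableSpace X] [BorelSpace X] [Nonempty X]
    {f : Y × X → Y × X} (hf : Continuous f) {ν : Measure (Y × X)} [IsFiniteMeasure ν]
    (hfν : MeasurePreserving f ν ν) {φ : Y × X → ℝ} (hφ : Continuous φ) {C : ℝ}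
    (hC : ∀ p, |φ p| ≤ C) :
    ∫ p, φ p ∂ν ≤
      ∫ y, limsup (fun n => ⨆ x, birkhoffAverage ℝ f φ n (y, x)) atTop ∂(ν.map Prod.fst) := by
  set g : ℕ → Y → ℝ := fun n y => ⨆ x, birkhoffAverage ℝ f φ n (y, x)
  have hA (n : ℕ) (p : Y × X) : |birkhoffAverage ℝ f φ n p| ≤ C :=
    norm_birkhoffAverage_le (f := f) (g := φ) hC n p
  have hA_cont (n : ℕ) : Continuous (birkhoffAverage ℝ f φ n) := hf.birkhoffAverage hφ n
  have hbdd (n : ℕ) (y : Y) : BddAbove (Set.range fun x => birkhoffAverage ℝ f φ n (y, x)) :=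
    ⟨C, Set.forall_mem_range.2 fun x => (abs_le.mp (hA n (y, x))).2⟩
  have hg_abs (n : ℕ) (y : Y) : |g n y| ≤ C := abs_le.mpr
    ⟨(abs_le.mp (hA n (y, Classical.arbitrary X))).1.trans (le_ciSup (hbdd n y) _),
      ciSup_le fun x => (abs_le.mp (hA n (y, x))).2⟩
  have hg_meas (n : ℕ) : Measurable (g n) :=
    (lowerSemicontinuous_ciSup (hbdd n) fun x =>
      ((hA_cont n).comp (.prodMk_left x)).lowerSemicontinuous).measurable
  refine le_integral_limsup_of_eventually_le_integral hg_meas hg_abs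
    ((eventually_ne_atTop 0).mono fun n hn => ?_)
  calc ∫ p, φ p ∂ν = ∫ p, birkhoffAverage ℝ f φ n p ∂ν :=
        (hfν.integral_birkhoffAverage (.of_bound hφ.aestronglyMeasurable C (.of_forall hC)) hn).symm
    _ ≤ ∫ p, g n p.1 ∂ν :=
        integral_mono (.of_bound (hA_cont n).aestronglyMeasurable C (.of_forall (hA n)))
          (.of_bound ((hg_meas n).comp measurable_fst).aestronglyMeasurable C
            (.of_forall fun p => hg_abs n p.1))
          fun p => le_ciSup (hbdd n p.1) p.2
    _ = ∫ y, g n y ∂(ν.map Prod.fst) :=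
        (integral_map measurable_fst.aemeasurable (hg_meas n).aestronglyMeasurable).symm

namespace POE

variable {A : Type} [Fintype A] [DecidableEq A] [TopologicalSpace A] [DiscreteTopology A]
  (Mtx : A → A → Bool)

instance : SecondCountableTopology (SubShift Mtx) :=
  (inferInstance : SecondCountableTopology {ω : ℕ → A | ∀ i, Mtx (ω i) (ω (i + 1)) = true})

theorem continuous_shiftT : Continuous (shiftT Mtx) :=
  (continuous_pi fun i => (continuous_apply (i + 1)).comp continuous_subtype_val).subtype_mk
    fun ω => (shiftT Mtx ω).2

theorem dShift_nonneg (ω ω' : SubShift Mtx) : 0 ≤ dShift Mtx ω ω' := by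
  unfold dShift; split <;> positivity

theorem dShift_le_of_forall_lt_eq {n : ℕ} {ω ω' : SubShift Mtx} (h : ∀ i < n, ω.1 i = ω'.1 i) :
    dShift Mtx ω ω' ≤ (2 : ℝ) ^ (-(n : ℤ)) := by
  unfold dShift
  split
  · positivity
  · exact zpow_le_zpow_right₀ one_le_two <| neg_le_neg <| Int.ofNat_le.mpr <|
      (Nat.le_find_iff _ _).mpr fun m hm => not_not.mpr (h m hm)

theorem tendsto_dShift_nhds (ω₀ : SubShift Mtx) :
    Tendsto (fun ω => dShift Mtx ω ω₀) (𝓝 ω₀) (𝓝 0) := by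
  have hagree (n : ℕ) : ∀ᶠ ω in 𝓝 ω₀, ∀ i < n, ω.1 i = ω₀.1 i :=
    (eventually_all_finite (Set.finite_lt_nat n)).2 fun i _ =>
      ((continuous_apply i).comp continuous_subtype_val).continuousAt
        ((isOpen_discrete {ω₀.1 i}).mem_nhds rfl)
  have hpow : Tendsto (fun n : ℕ => (2 : ℝ) ^ (-(n : ℤ))) atTop (𝓝 0) := by
    simpa [zpow_neg, zpow_natCast, Function.comp_def] using
      tendsto_inv_atTop_zero.comp (tendsto_pow_atTop_atTop_of_one_lt (one_lt_two (α := ℝ)))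
  refine tendsto_order.2 ⟨fun a ha => .of_forall fun ω => ha.trans_le (dShift_nonneg Mtx _ _),
    fun ε hε => ?_⟩
  obtain ⟨n, hn⟩ := (hpow.eventually (gt_mem_nhds hε)).exists
  exact (hagree n).mono fun ω hω => (dShift_le_of_forall_lt_eq Mtx hω).trans_lt hn

theorem tendstoUniformly_of_dist_le_dShift_rpow {X : Type*} [PseudoMetricSpace X]
    {F : SubShift Mtx → X → X} {αF HF : ℝ} (hαF : 0 < αF)
    (hFHol : ∀ ω ω' t, dist (F ω t) (F ω' t) ≤ HF * dShift Mtx ω ω' ^ αF) (ω₀ : SubShift Mtx) :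
    TendstoUniformly F (F ω₀) (𝓝 ω₀) := by
  have hlim : Tendsto (fun ω => HF * dShift Mtx ω ω₀ ^ αF) (𝓝 ω₀) (𝓝 0) := by
    simpa [Real.zero_rpow hαF.ne'] using
      ((tendsto_dShift_nhds Mtx ω₀).rpow_const (Or.inr hαF.le)).const_mul HF
  refine Metric.tendstoUniformly_iff.2 fun ε hε => ?_
  filter_upwards [hlim.eventually (gt_mem_nhds hε)] with ω hω t
  exact (dist_comm (F ω₀ t) (F ω t) ▸ hFHol ω ω₀ t).trans_lt hω

theorem continuous_skewF {X : Type} [MetricSpace X] {F : SubShift Mtx → X → X} {αF HF : ℝ}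
    (hαF : 0 < αF) (hFHol : ∀ ω ω' t, dist (F ω t) (F ω' t) ≤ HF * dShift Mtx ω ω' ^ αF)
    (hFcont : ∀ ω, Continuous (F ω)) : Continuous (skewF Mtx F) :=
  ((continuous_shiftT Mtx).comp continuous_fst).prodMk <|
    continuous_uncurry_of_tendstoUniformly hFcont
      (tendstoUniformly_of_dist_le_dShift_rpow Mtx hαF hFHol)

theorem skewF_iterate {X : Type} [MetricSpace X] (F : SubShift Mtx → X → X)
    (ω : SubShift Mtx) (t : X) (k : ℕ) :
    (skewF Mtx F)^[k] (ω, t) = ((shiftT Mtx)^[k] ω, iterF Mtx F ω k t) := by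
  induction k with
  | zero => rfl
  | succ k ih => rw [Function.iterate_succ_apply', ih, Function.iterate_succ_apply']; rfl

theorem phiTilde_eq_limsup_iSup_birkhoffAverage {X : Type} [MetricSpace X]
    (F : SubShift Mtx → X → X) (φ : X → SubShift Mtx → ℝ) (ω : SubShift Mtx) :
    phiTilde Mtx F φ ω = limsup (fun n =>
      ⨆ t, birkhoffAverage ℝ (skewF Mtx F) (fun p => φ p.2 p.1) n (ω, t)) atTop := by
  simp only [phiTilde, birkhoffAverage, birkhoffSum, skewF_iterate, smul_eq_mul]

theorem stmt5_general
    {A : Type} [Fintype A] [DecidableEq A]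
    [TopologicalSpace A] [DiscreteTopology A]
    (Mtx : A → A → Bool)
    {X : Type} [MetricSpace X] [Nonempty X]
    [MeasurableSpace X] [BorelSpace X]
    (F : SubShift Mtx → X → X)
    (αF HF : ℝ) (hαF : 0 < αF)
    (hFHol : ∀ ω ω' t, dist (F ω t) (F ω' t) ≤ HF * dShift Mtx ω ω' ^ αF)
    (hFcont : ∀ ω, Continuous (F ω))
    (φ : X → SubShift Mtx → ℝ) (H : ℝ)
    (hBdd : ∀ t ω, |φ t ω| ≤ H)
    (hφcont : Continuous fun p : SubShift Mtx × X => φ p.2 p.1)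
    (νhat : Measure (SubShift Mtx × X)) (hprob : IsProbabilityMeasure νhat)
    (hinv : MeasurePreserving (skewF Mtx F) νhat νhat) :
    ∫ p, φ p.2 p.1 ∂νhat ≤ ∫ ω, phiTilde Mtx F φ ω ∂(νhat.map Prod.fst) := by
  simpa only [phiTilde_eq_limsup_iSup_birkhoffAverage] using
    integral_le_integral_limsup_iSup_birkhoffAverage (continuous_skewF Mtx hαF hFHol hFcont)
      hinv hφcont fun p => hBdd p.2 p.1

/-- For every `F̂`-invariant Borel probability measure `ν̂` on `Σ × X`, `∫ φ̂ dν̂ ≤ ∫ φ̃ d(ν̂ ∘ π⁻¹)`. -/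
theorem stmt5
    {A : Type} [Fintype A] [DecidableEq A] [Nonempty A]
    [TopologicalSpace A] [DiscreteTopology A]
    (Mtx : A → A → Bool)
    {X : Type} [MetricSpace X] [CompactSpace X] [Nonempty X]
    [MeasurableSpace X] [BorelSpace X]
    (F : SubShift Mtx → X → X)
    (αF HF : ℝ) (hαF : 0 < αF) (hHF : 0 < HF)
    (hFHol : ∀ ω ω' t, dist (F ω t) (F ω' t) ≤ HF * dShift Mtx ω ω' ^ αF)
    (hFcont : ∀ ω, Continuous (F ω)) (hFbij : ∀ ω, Function.Bijective (F ω))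
    (φ : X → SubShift Mtx → ℝ) (α H : ℝ) (hα : α ∈ Set.Ioc (0 : ℝ) 1) (hH : 0 < H)
    (hHol : ∀ t ω ω', |φ t ω - φ t ω'| ≤ H * dShift Mtx ω ω' ^ α)
    (hBdd : ∀ t ω, |φ t ω| ≤ H)
    (hφcont : Continuous fun p : SubShift Mtx × X => φ p.2 p.1)
    (νhat : Measure (SubShift Mtx × X)) (hprob : IsProbabilityMeasure νhat)
    (hinv : MeasurePreserving (skewF Mtx F) νhat νhat) :
    ∫ p, φ p.2 p.1 ∂νhat ≤ ∫ ω, phiTilde Mtx F φ ω ∂(νhat.map Prod.fst) :=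
  stmt5_general Mtx F αF HF hαF hFHol hFcont φ H hBdd hφcont νhat hprob hinv

end POE
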